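/- arXiv:2203.11446 — 10 statements merged into one kernel-verified Lean document; each statement's English description precedes it below -/
import Mathlib

section
/- Let k ≥ 2 be an integer, τ > 2 a real number, and let (u_i)_{i≥-1} be a sequence of strictly positive reals with u_0 = 1 and u_{-1} + u_1 < τ, satisfying the SOS boundary-law recurrence u_{i+1} = (u_{-1} + u_1 - τ)·u_i^k + τ·u_i - u_{i-1} for all i ≥ 0. Then for every i ≥ 1 one has 0 < u_i < x_0 · min{ ((k-1)/k^{k/(k-1)})·τ , 1 }, where x_0 = (τ/(τ - u_{-1} - u_1))^{1/(k-1)}. -/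
/-!
Write `c = τ - u (-1) - u 1 > 0` and `f x = τ x - c x ^ k`, so that the recurrence reads
`u (i + 1) + u (i - 1) = f (u i)`. Positivity of the neighbours gives `u (i + 1) < f (u i)`.
Hence `f (u i) > 0`, i.e. `c (u i) ^ (k - 1) < τ`, which is `u i < x₀`; and `u i` is below the
maximum of `f` on `[0, ∞)`, attained at `x₀ / k ^ (1 / (k - 1))` with value
`x₀ (k - 1) τ / k ^ (k / (k - 1))`.
-/

-- Bernoulli's inequality, read as the tangent-line bound for the convex `x ^ k` at `a`.
lemma mul_sub_mul_pow_le_of_critical {R : Type*} [CommRing R] [LinearOrder R]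
    [IsStrictOrderedRing R] {τ c a x : R} (k : ℕ) (hc : 0 ≤ c) (ha : 0 ≤ a) (hx : 0 ≤ x)
    (hcrit : τ = c * k * a ^ (k - 1)) :
    τ * x - c * x ^ k ≤ τ * a - c * a ^ k := by
  have bernoulli := pow_add_mul_le_add_pow ha (by linarith : 0 ≤ 2 * a + (x - a)) k
  rw [add_sub_cancel] at bernoulli
  subst hcrit
  linear_combination c * bernoulli

lemma one_div_natCast_sub_one {k : ℕ} (hk : 1 ≤ k) :
    (1 : ℝ) / ((k : ℝ) - 1) = ((k - 1 : ℕ) : ℝ)⁻¹ := by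
  rw [Nat.cast_sub hk, Nat.cast_one, one_div]

lemma rpow_one_div_sub_one_pow {k : ℕ} (hk : 2 ≤ k) {y : ℝ} (hy : 0 ≤ y) :
    (y ^ ((1 : ℝ) / ((k : ℝ) - 1))) ^ (k - 1) = y := by
  rw [one_div_natCast_sub_one (by omega)]
  exact Real.rpow_inv_natCast_pow hy (by omega)

lemma mul_sub_mul_pow_le {k : ℕ} (hk : 2 ≤ k) {τ c x : ℝ} (hτ : 0 ≤ τ) (hc : 0 < c)
    (hx : 0 ≤ x) :
    τ * x - c * x ^ k ≤ (τ / c) ^ ((1 : ℝ) / ((k : ℝ) - 1)) *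
      (((k : ℝ) - 1) / (k : ℝ) ^ ((k : ℝ) / ((k : ℝ) - 1)) * τ) := by
  set s : ℝ := 1 / ((k : ℝ) - 1)
  set x₀ := (τ / c) ^ s
  have hk₀ : (0 : ℝ) < k := by positivity
  have hks : (0 : ℝ) < (k : ℝ) ^ s := Real.rpow_pos_of_pos hk₀ s
  have hx₀ : 0 ≤ x₀ := Real.rpow_nonneg (div_nonneg hτ hc.le) s
  set a := x₀ / (k : ℝ) ^ s
  have ha_pow : a ^ (k - 1) = τ / c / k := by
    rw [div_pow, rpow_one_div_sub_one_pow hk (div_nonneg hτ hc.le),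
      rpow_one_div_sub_one_pow hk hk₀.le]
  have hcrit : τ = c * k * a ^ (k - 1) := by
    rw [ha_pow]; field_simp
  have ha_pow_k : a ^ k = a ^ (k - 1) * a := by
    rw [← pow_succ, Nat.sub_add_cancel (by omega)]
  have hk_exp : (k : ℝ) ^ ((k : ℝ) / ((k : ℝ) - 1)) = (k : ℝ) ^ s * k := by
    have hk₁ : (k : ℝ) - 1 ≠ 0 := by
      have : (2 : ℝ) ≤ k := by exact_mod_cast hk
      linarith
    have hs : (k : ℝ) / ((k : ℝ) - 1) = s + 1 := by
      simp only [s]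
      field_simp
      ring
    rw [hs, Real.rpow_add_one hk₀.ne']
  calc τ * x - c * x ^ k ≤ τ * a - c * a ^ k :=
        mul_sub_mul_pow_le_of_critical k hc.le (div_nonneg hx₀ hks.le) hx hcrit
    _ = x₀ * (((k : ℝ) - 1) / (k : ℝ) ^ ((k : ℝ) / ((k : ℝ) - 1)) * τ) := by
        rw [ha_pow_k, ha_pow, hk_exp]
        simp only [a]
        field_simp

lemma lt_rpow_of_pos_mul_sub_mul_pow {k : ℕ} (hk : 2 ≤ k) {τ c x : ℝ} (hc : 0 < c)
    (hx : 0 < x) (h : 0 < τ * x - c * x ^ k) :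
    x < (τ / c) ^ ((1 : ℝ) / ((k : ℝ) - 1)) := by
  have hpow : x ^ (k - 1) < τ / c := by
    rw [lt_div_iff₀ hc]
    have : x ^ k = x ^ (k - 1) * x := by rw [← pow_succ, Nat.sub_add_cancel (by omega)]
    nlinarith
  rw [one_div_natCast_sub_one (by omega), Real.lt_rpow_inv_iff_of_pos hx.le
    ((pow_nonneg hx.le _).trans hpow.le) (by simp; omega), Real.rpow_natCast]
  exact hpow

theorem sos_bounded_sequence_general
    (k : ℕ) (hk : 2 ≤ k) (τ : ℝ)
    (u : ℤ → ℝ)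
    (hpos : ∀ i : ℤ, -1 ≤ i → 0 < u i)
    (hsum : u (-1) + u 1 < τ)
    (hrec : ∀ i : ℤ, 0 ≤ i →
      u (i + 1) = (u (-1) + u 1 - τ) * (u i) ^ k + τ * u i - u (i - 1)) :
    ∀ i : ℤ, 1 ≤ i →
      0 < u i ∧
      u i < (τ / (τ - u (-1) - u 1)) ^ ((1 : ℝ) / ((k : ℝ) - 1)) *
        min ((((k : ℝ) - 1) / (k : ℝ) ^ ((k : ℝ) / ((k : ℝ) - 1)) * τ)) 1 := by
  intro i hi
  set c := τ - u (-1) - u 1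
  have hc : 0 < c := by linarith
  have hτ : 0 < τ := by linarith [hpos (-1) le_rfl, hpos 1 (by norm_num)]
  have hstep : ∀ j : ℤ, 0 ≤ j → u (j + 1) < τ * u j - c * u j ^ k := fun j hj => by
    have := hpos (j - 1) (by omega)
    rw [hrec j hj]
    linarith
  rw [mul_min_of_nonneg _ _ (Real.rpow_nonneg (div_nonneg hτ.le hc.le) _), mul_one]
  refine ⟨hpos i (by omega), lt_min ?_ ?_⟩
  · calc u i = u (i - 1 + 1) := by rw [sub_add_cancel]
      _ < τ * u (i - 1) - c * u (i - 1) ^ k := hstep (i - 1) (by omega)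
      _ ≤ _ := mul_sub_mul_pow_le hk hτ.le hc (hpos (i - 1) (by omega)).le
  · exact lt_rpow_of_pos_mul_sub_mul_pow hk hc (hpos i (by omega))
      ((hpos (i + 1) (by omega)).trans (hstep i (by omega)))

/-- If a strictly positive sequence `(u i)_{i ≥ -1}` with `u 0 = 1` and
`u (-1) + u 1 < τ` satisfies the SOS boundary-law recurrence
`u (i+1) = (u (-1) + u 1 - τ) * (u i)^k + τ * u i - u (i-1)` for all `i ≥ 0`,
then for every `i ≥ 1` one has
`0 < u i < x₀ * min (((k-1)/k^(k/(k-1))) * τ) 1`,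
where `x₀ = (τ / (τ - u (-1) - u 1))^(1/(k-1))`. -/
theorem sos_bounded_sequence
    (k : ℕ) (hk : 2 ≤ k) (τ : ℝ) (hτ : 2 < τ)
    (u : ℤ → ℝ)
    (hpos : ∀ i : ℤ, -1 ≤ i → 0 < u i)
    (hu0 : u 0 = 1)
    (hsum : u (-1) + u 1 < τ)
    (hrec : ∀ i : ℤ, 0 ≤ i →
      u (i + 1) = (u (-1) + u 1 - τ) * (u i) ^ k + τ * u i - u (i - 1)) :
    ∀ i : ℤ, 1 ≤ i →
      0 < u i ∧
      u i < (τ / (τ - u (-1) - u 1)) ^ ((1 : ℝ) / ((k : ℝ) - 1)) *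
        min ((((k : ℝ) - 1) / (k : ℝ) ^ ((k : ℝ) / ((k : ℝ) - 1)) * τ)) 1 :=
  sos_bounded_sequence_general k hk τ u hpos hsum hrec
end

section
/- Let k ≥ 2, q ≥ 1 be integers and τ > 2 a real number. Any q-periodic sequence (u_i)_{i≥-1} of strictly positive reals with u_{-1} = u_1 and u_0 = 1 that satisfies the SOS boundary-law recurrence u_{i+1} = (u_{-1} + u_1 - τ)·u_i^k + τ·u_i - u_{i-1} for all i ≥ 0 is mirror symmetric, i.e. u_i = u_{q-i} for all i = -1, 0, 1, …, ⌊q/2⌋. -/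
/-- Any `q`-periodic strictly positive sequence `(u i)_{i ≥ -1}` with
`u (-1) = u 1`, `u 0 = 1`, satisfying the SOS boundary-law recurrence,
is mirror symmetric: `u i = u (q - i)` for all `-1 ≤ i ≤ ⌊q/2⌋`. -/
theorem sos_periodic_mirror_symmetric
    (k : ℕ) (hk : 2 ≤ k) (q : ℕ) (hq : 1 ≤ q) (τ : ℝ) (hτ : 2 < τ)
    (u : ℤ → ℝ)
    (hpos : ∀ i : ℤ, -1 ≤ i → 0 < u i)
    (hperiodic : ∀ i : ℤ, -1 ≤ i → u (i + q) = u i)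
    (hsym : u (-1) = u 1)
    (hu0 : u 0 = 1)
    (hrec : ∀ i : ℤ, 0 ≤ i →
      u (i + 1) = (u (-1) + u 1 - τ) * (u i) ^ k + τ * u i - u (i - 1)) :
    ∀ i : ℤ, -1 ≤ i → i ≤ (q : ℤ) / 2 → u i = u ((q : ℤ) - i) := by
  have key : ∀ n : ℕ, (n : ℤ) ≤ q →
      u ((n : ℤ) - 1) = u ((q : ℤ) - n + 1) ∧ u (n : ℤ) = u ((q : ℤ) - n) := by
    intro n
    induction n with
    | zero =>
      intro _
      have h1 : u ((1 : ℤ) + q) = u 1 := hperiodic 1 (by norm_num)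
      have h0 : u ((0 : ℤ) + q) = u 0 := hperiodic 0 (by norm_num)
      constructor
      · have : ((0 : ℕ) : ℤ) - 1 = -1 := by norm_num
        rw [this, hsym, ← h1]
        congr 1
        push_cast; ring
      · rw [show ((0 : ℕ) : ℤ) = 0 by norm_num, ← h0]
        congr 1
        push_cast; ring
    | succ n ih =>
      intro hn
      have hn1 : (n : ℤ) + 1 ≤ q := by push_cast at hn; omega
      obtain ⟨h1, h2⟩ := ih (by omega)
      have hqn : (0 : ℤ) ≤ (q : ℤ) - n := by omega
      refine ⟨?_, ?_⟩
      · have e : ((n + 1 : ℕ) : ℤ) - 1 = (n : ℤ) := by push_cast; ring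
        have e' : (q : ℤ) - ((n + 1 : ℕ) : ℤ) + 1 = (q : ℤ) - n := by push_cast; ring
        rw [e, e', h2]
      · have e1 := hrec n (by positivity)
        have e2 := hrec ((q : ℤ) - n) hqn
        rw [← h2, ← h1] at e2
        have eA : ((n + 1 : ℕ) : ℤ) = (n : ℤ) + 1 := by push_cast; ring
        have eB : (q : ℤ) - ((n + 1 : ℕ) : ℤ) = ((q : ℤ) - n) - 1 := by push_cast; ring
        rw [eB, eA, e1]
        linarith [e2]
  intro i hi hi2
  rcases eq_or_lt_of_le hi with h | h
  · have h0 := (key 0 (by exact_mod_cast Nat.zero_le q)).1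
    rw [← h]
    have e : ((0 : ℕ) : ℤ) - 1 = -1 := by norm_num
    have e' : (q : ℤ) - ((0 : ℕ) : ℤ) + 1 = (q : ℤ) - (-1) := by push_cast; ring
    rw [e, e'] at h0
    exact h0
  · have hi0 : 0 ≤ i := by omega
    lift i to ℕ using hi0 with n
    have hnq : (n : ℤ) ≤ q := le_trans hi2 (by omega)
    exact (key n hnq).2
end

section
/- Let k ≥ 2, q ≥ 1 be integers and τ > 2 a real number. If (u_i)_{i≥-1} is a q-periodic sequence of strictly positive reals with u_{-1} ≠ u_1 and u_0 = 1 satisfying the SOS boundary-law recurrence u_{i+1} = (u_{-1} + u_1 - τ)·u_i^k + τ·u_i - u_{i-1} for all i ≥ 0, and there exists p < q with u_p = 1 and u_{p+1} = u_{-1}, then the sequence is two-mirror symmetric with this p: u_i = u_{p-i} for i = -1, 0, 1, …, ⌊p/2⌋, and u_{p+j} = u_{q-j} for j = 0, 1, …, ⌊(q-p)/2⌋. -/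
/-- A `q`-periodic strictly positive sequence `(u i)_{i ≥ -1}` with
`u (-1) ≠ u 1`, `u 0 = 1`, satisfying the SOS boundary-law recurrence,
such that `u p = 1` and `u (p+1) = u (-1)` for some `p < q`,
is two-mirror symmetric with this `p`. -/
theorem sos_periodic_two_mirror_symmetric
    (k : ℕ) (hk : 2 ≤ k) (q : ℕ) (hq : 1 ≤ q) (τ : ℝ) (hτ : 2 < τ)
    (u : ℤ → ℝ)
    (hpos : ∀ i : ℤ, -1 ≤ i → 0 < u i)
    (hperiodic : ∀ i : ℤ, -1 ≤ i → u (i + q) = u i)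
    (hne : u (-1) ≠ u 1)
    (hu0 : u 0 = 1)
    (hrec : ∀ i : ℤ, 0 ≤ i →
      u (i + 1) = (u (-1) + u 1 - τ) * (u i) ^ k + τ * u i - u (i - 1))
    (p : ℕ) (hpq : p < q) (hup : u p = 1) (hup1 : u (p + 1) = u (-1)) :
    (∀ i : ℤ, -1 ≤ i → i ≤ (p : ℤ) / 2 → u i = u ((p : ℤ) - i)) ∧
    (∀ j : ℤ, 0 ≤ j → j ≤ ((q : ℤ) - (p : ℤ)) / 2 →
      u ((p : ℤ) + j) = u ((q : ℤ) - j)) := by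
  -- First mirror: u (n-1) and u n match u reflected around p/2, for n ≤ p+1.
  have key : ∀ n : ℕ, (n : ℤ) ≤ (p : ℤ) + 1 →
      u ((n : ℤ) - 1) = u ((p : ℤ) - (n : ℤ) + 1) ∧ u (n : ℤ) = u ((p : ℤ) - (n : ℤ)) := by
    intro n
    induction n with
    | zero =>
      intro _
      constructor
      · simpa using hup1.symm
      · simpa [hu0] using hup.symm
    | succ n ih =>
      intro hn
      push_cast at hn ⊢
      have hn' : (n : ℤ) ≤ (p : ℤ) := by linarith
      obtain ⟨ih1, ih2⟩ := ih (by linarith)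
      have g1 : u ((n : ℤ) + 1 - 1) = u ((p : ℤ) - ((n : ℤ) + 1) + 1) := by
        have e1 : (n : ℤ) + 1 - 1 = (n : ℤ) := by ring
        have e2 : (p : ℤ) - ((n : ℤ) + 1) + 1 = (p : ℤ) - n := by ring
        rw [e1, e2]; exact ih2
      refine ⟨g1, ?_⟩
      have h1 := hrec n (by positivity)
      have h2 := hrec ((p : ℤ) - n) (by linarith)
      have e3 : ((p : ℤ) - (n + 1)) = (p : ℤ) - n - 1 := by ring
      rw [h1, ih2, ih1, e3]
      linarith [h2]
  have h1int : u 1 = u ((p : ℤ) - 1) := by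
    have := (key 1 (by push_cast; linarith)).2
    simpa using this
  -- Second mirror: u (p+n) = u (q-n) for n ≤ q.
  have key2 : ∀ n : ℕ, (n : ℤ) ≤ (q : ℤ) →
      u ((p : ℤ) + (n : ℤ)) = u ((q : ℤ) - (n : ℤ)) ∧
      u ((p : ℤ) + (n : ℤ) - 1) = u ((q : ℤ) - (n : ℤ) + 1) := by
    intro n
    induction n with
    | zero =>
      intro _
      constructor
      · have hq0 : u ((0 : ℤ) + (q : ℤ)) = u 0 := hperiodic 0 (by norm_num)
        simpa [hu0, hup] using (hq0.trans hu0).symm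
      · have hq1 : u ((1 : ℤ) + (q : ℤ)) = u 1 := hperiodic 1 (by norm_num)
        have : u ((q : ℤ) + 1) = u 1 := by rw [add_comm]; exact hq1
        have e1 : (p : ℤ) + (0 : ℕ) - 1 = (p : ℤ) - 1 := by push_cast; ring
        have e2 : (q : ℤ) - (0 : ℕ) + 1 = (q : ℤ) + 1 := by push_cast; ring
        rw [e1, e2, this, h1int]
    | succ n ih =>
      intro hn
      push_cast at hn ⊢
      have hn' : (n : ℤ) ≤ (q : ℤ) - 1 := by linarith
      obtain ⟨ih1, ih2⟩ := ih (by linarith)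
      constructor
      · have h1 := hrec ((p : ℤ) + n) (by positivity)
        have h2 := hrec ((q : ℤ) - n) (by linarith)
        have e1 : (p : ℤ) + n + 1 = (p : ℤ) + (n + 1) := by ring
        have e3 : ((q : ℤ) - (n + 1)) = (q : ℤ) - n - 1 := by ring
        rw [e1] at h1
        rw [h1, ih1, ih2, e3]
        linarith [h2]
      · have e : (p : ℤ) + (n + 1) - 1 = (p : ℤ) + n := by ring
        have e' : (q : ℤ) - (n + 1) + 1 = (q : ℤ) - n := by ring
        rw [e, e']
        exact ih1
  constructor
  · intro i hi hi2
    have hp2 : (p : ℤ) / 2 ≤ (p : ℤ) := Int.ediv_le_self 2 (by positivity)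
    have hip : i ≤ (p : ℤ) := le_trans hi2 hp2
    set n : ℕ := (i + 1).toNat with hn
    have hni : (n : ℤ) = i + 1 := Int.toNat_of_nonneg (by linarith)
    have := (key n (by rw [hni]; linarith)).1
    rw [hni] at this
    have e1 : i + 1 - 1 = i := by ring
    have e2 : (p : ℤ) - (i + 1) + 1 = (p : ℤ) - i := by ring
    rwa [e1, e2] at this
  · intro j hj hj2
    have hqp : (0 : ℤ) ≤ (q : ℤ) - (p : ℤ) := by
      have : (p : ℤ) < (q : ℤ) := by exact_mod_cast hpq
      linarith
    have h2 : ((q : ℤ) - (p : ℤ)) / 2 ≤ (q : ℤ) - (p : ℤ) := Int.ediv_le_self 2 hqp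
    have hjq : j ≤ (q : ℤ) := by
      have : (0 : ℤ) ≤ (p : ℤ) := by positivity
      linarith
    set n : ℕ := j.toNat with hn
    have hnj : (n : ℤ) = j := Int.toNat_of_nonneg hj
    have := (key2 n (by rw [hnj]; exact hjq)).1
    rwa [hnj] at this
end

section
/- Fix an integer k ≥ 2 and a real number τ > 2, and let x > 0. Define the sequence (u_i)_{i≥-1} by u_i = 1 if i ≡ 0 (mod 3) and u_i = x otherwise (so the sequence is x, 1, x, x, 1, x, x, 1, …). Then this 3-periodic mirror symmetric sequence satisfies the SOS boundary-law recurrence u_{i+1} = (u_{-1} + u_1 - τ)·u_i^k + τ·u_i - u_{i-1} for all i ≥ 0 if and only if 2x^{k+1} − τ·x^k + (τ−1)·x − 1 = 0. -/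
/-- The 3-periodic mirror symmetric sequence `x, 1, x, x, 1, x, x, 1, …`
(i.e. `u i = 1` for `i ≡ 0 (mod 3)` and `u i = x` otherwise) satisfies the
SOS boundary-law recurrence iff `2x^(k+1) − τx^k + (τ−1)x − 1 = 0`. -/
theorem sos_three_periodic_mirror
    (k : ℕ) (hk : 2 ≤ k) (τ : ℝ) (hτ : 2 < τ) (x : ℝ) (hx : 0 < x)
    (u : ℤ → ℝ) (hu : ∀ i : ℤ, u i = if i % 3 = 0 then 1 else x) :
    (∀ i : ℤ, 0 ≤ i →
      u (i + 1) = (u (-1) + u 1 - τ) * (u i) ^ k + τ * u i - u (i - 1)) ↔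
    2 * x ^ (k + 1) - τ * x ^ k + (τ - 1) * x - 1 = 0 := by
  have hm1 : u (-1) = x := by rw [hu]; norm_num
  have h1 : u 1 = x := by rw [hu]; norm_num
  constructor
  · intro h
    have := h 1 (by norm_num)
    norm_num [hu, hm1, h1] at this
    
    rw [pow_succ]
    nlinarith [this]
  · intro hp i hi
    rw [hu (i+1), hu i, hu (i-1), hm1, h1]
    have h3 : i % 3 = 0 ∨ i % 3 = 1 ∨ i % 3 = 2 := by omega
    have hps : x ^ (k + 1) = x ^ k * x := pow_succ x k
    rcases h3 with h | h | h
    · rw [if_pos h, if_neg (by omega : ¬ (i+1) % 3 = 0),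
        if_neg (by omega : ¬ (i-1) % 3 = 0), one_pow]
      ring
    · rw [if_neg (by omega : ¬ (i+1) % 3 = 0), if_neg (by omega : ¬ i % 3 = 0),
        if_pos (by omega : (i-1) % 3 = 0)]
      nlinarith [hp]
    · rw [if_pos (by omega : (i+1) % 3 = 0), if_neg (by omega : ¬ i % 3 = 0),
        if_neg (by omega : ¬ (i-1) % 3 = 0)]
      nlinarith [hp]
end

section
/- For each integer k ≥ 2 there exists exactly one critical value τ_c = τ_c(k) with 2 < τ_c < τ_0 := (2k+1)/(k−1) such that, for the equation 2x^{k+1} − τ·x^k + (τ−1)·x − 1 = 0 in the unknown x > 0 (with parameter τ > 2): (i) if τ < τ_c the equation has a unique positive solution; (ii) if τ = τ_c it has exactly two positive solutions; (iii) if τ > τ_c and τ ≠ τ_0 it has exactly three positive solutions; (iv) if τ = τ_0 it has exactly two positive solutions. In each case x = 1 is one of the solutions. -/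
/-!
The polynomial factors as `(x - 1) * q_τ(x)` with
`q_τ(x) = 2x^k + 1 - (τ - 2)(x + ⋯ + x^(k-1))` (`cofactor k τ`), and for `x > 0` we have
`q_τ(x) = 0` iff `τ = g(x) := 2 + (2x^k + 1) / (x + ⋯ + x^(k-1))` (`threshold k x`).
Since `g(x) > 2x` and `g(x) > 1/x + 1`, `g` attains its minimum `τ_c` on `(0, ∞)`, and `q_τ`
has no positive zero for `τ < τ_c`. For `τ > 2` the derivative of `q_τ` is
`2k E(x) (x^(k-1)/E(x) - (τ-2)/(2k))`, where `E` is the derivative of `x + ⋯ + x^(k-1)`; as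
`x^(k-1)/E(x)` is increasing, `q_τ` decreases and then increases, so it has exactly one positive
zero at `τ = τ_c` and exactly two for `τ > τ_c`. Finally `g(1) = τ_0`, so `1` is a zero of `q_τ`
exactly when `τ = τ_0`, and `q_{τ_0}'(1) = k/2 ≠ 0` shows that `1` does not minimise `g`,
i.e. `τ_c < τ_0`.
-/

open Set

theorem IsCompact.exists_isMinOn_of_le_of_notMem {α β : Type*} [TopologicalSpace α]
    [LinearOrder β] [TopologicalSpace β] [ClosedIicTopology β] {f : α → β} {s K : Set α}
    {x₀ : α}
    (hK : IsCompact K) (hf : ContinuousOn f K) (hx₀ : x₀ ∈ K)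
    (hout : ∀ x ∈ s \ K, f x₀ ≤ f x) : ∃ x ∈ K, IsMinOn f s x := by
  obtain ⟨x, hxK, hmin⟩ := hK.exists_isMinOn ⟨x₀, hx₀⟩ hf
  refine ⟨x, hxK, fun y hy => ?_⟩
  by_cases hyK : y ∈ K
  · exact hmin hyK
  · exact (hmin hx₀).trans (hout y ⟨hy, hyK⟩)

namespace SOSThreePeriodic

def posZeros (f : ℝ → ℝ) : Set ℝ := {x | 0 < x ∧ f x = 0}

section Unimodal

variable {f : ℝ → ℝ} {m : ℝ}

theorem isMinOn_of_strictAntiOn_of_strictMonoOn (hanti : StrictAntiOn f (Icc 0 m))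
    (hmono : StrictMonoOn f (Ici m)) (hm : 0 ≤ m) : IsMinOn f (Ici 0) m :=
  fun x (hx : 0 ≤ x) => by
  rcases le_total x m with h | h
  · exact hanti.antitoneOn ⟨hx, h⟩ ⟨hm, le_rfl⟩ h
  · exact hmono.monotoneOn self_mem_Ici h h

theorem posZeros_eq_singleton (hanti : StrictAntiOn f (Icc 0 m)) (hmono : StrictMonoOn f (Ici m))
    (hm : 0 < m) (hfm : f m = 0) : posZeros f = {m} := by
  refine Subset.antisymm (fun x ⟨hx, hfx⟩ => ?_) (singleton_subset_iff.2 ⟨hm, hfm⟩)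
  rcases le_total x m with h | h
  · exact hanti.injOn ⟨hx.le, h⟩ ⟨hm.le, le_rfl⟩ (hfx.trans hfm.symm)
  · exact hmono.injOn h self_mem_Ici (hfx.trans hfm.symm)

theorem ncard_posZeros_eq_two (hf : ContinuousOn f (Ici 0)) (hanti : StrictAntiOn f (Icc 0 m))
    (hmono : StrictMonoOn f (Ici m)) (hm : 0 ≤ m) (hf₀ : 0 < f 0) (hfm : f m < 0) {b : ℝ}
    (hb : m ≤ b) (hfb : 0 < f b) : (posZeros f).ncard = 2 := by
  obtain ⟨r₁, ⟨hr₁0, hr₁m⟩, hr₁⟩ := intermediate_value_Icc' hm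
    (hf.mono Icc_subset_Ici_self) ⟨hfm.le, hf₀.le⟩
  obtain ⟨r₂, ⟨hr₂m, -⟩, hr₂⟩ := intermediate_value_Icc hb
    (hf.mono fun x hx => hm.trans hx.1) ⟨hfm.le, hfb.le⟩
  have hr₁m' : r₁ < m := hr₁m.lt_of_ne (by rintro rfl; linarith)
  have hr₁0' : 0 < r₁ := hr₁0.lt_of_ne (by rintro rfl; linarith)
  have hr₂m' : m < r₂ := hr₂m.lt_of_ne (by rintro rfl; linarith)
  refine Set.ncard_eq_two.2 ⟨r₁, r₂, (hr₁m'.trans hr₂m').ne, ?_⟩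
  refine Subset.antisymm (fun x ⟨hx, hfx⟩ => ?_) ?_
  · rcases le_total x m with h | h
    · exact Or.inl (hanti.injOn ⟨hx.le, h⟩ ⟨hr₁0, hr₁m⟩ (hfx.trans hr₁.symm))
    · exact Or.inr (hmono.injOn h hr₂m (hfx.trans hr₂.symm))
  · rintro x (rfl | rfl)
    exacts [⟨hr₁0', hr₁⟩, ⟨hm.trans_lt hr₂m', hr₂⟩]

end Unimodal

noncomputable def geomPart (k : ℕ) (x : ℝ) : ℝ := ∑ i ∈ Finset.Ico 1 k, x ^ i

noncomputable def geomPartDeriv (k : ℕ) (x : ℝ) : ℝ :=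
  ∑ i ∈ Finset.Ico 1 k, (i : ℝ) * x ^ (i - 1)

variable {k : ℕ} {x : ℝ}

theorem geomPart_mul_sub_one (hk : 1 ≤ k) (x : ℝ) : geomPart k x * (x - 1) = x ^ k - x := by
  simpa [geomPart] using geom_sum_Ico_mul x hk

theorem geomPart_pos (hk : 2 ≤ k) (hx : 0 < x) : 0 < geomPart k x :=
  Finset.sum_pos (fun i _ => pow_pos hx i) ⟨1, Finset.mem_Ico.2 ⟨le_rfl, hk⟩⟩

theorem geomPart_zero (k : ℕ) : geomPart k 0 = 0 :=
  Finset.sum_eq_zero fun _ hi => zero_pow (Nat.one_le_iff_ne_zero.1 (Finset.mem_Ico.1 hi).1)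

theorem geomPart_one (hk : 1 ≤ k) : geomPart k 1 = k - 1 := by
  simp [geomPart, Nat.cast_sub hk]

theorem hasDerivAt_geomPart (k : ℕ) (x : ℝ) : HasDerivAt (geomPart k) (geomPartDeriv k x) x :=
  HasDerivAt.fun_sum fun i _ => hasDerivAt_pow i x

theorem continuous_geomPartDeriv (k : ℕ) : Continuous (geomPartDeriv k) := by
  unfold geomPartDeriv; fun_prop

theorem one_le_geomPartDeriv (hk : 2 ≤ k) (hx : 0 ≤ x) : 1 ≤ geomPartDeriv k x := by
  simpa [geomPartDeriv] using Finset.single_le_sum (f := fun i : ℕ => (i : ℝ) * x ^ (i - 1))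
    (fun i _ => by positivity) (Finset.mem_Ico.2 ⟨le_rfl, hk⟩)

theorem geomPartDeriv_pos (hk : 2 ≤ k) (hx : 0 ≤ x) : 0 < geomPartDeriv k x :=
  zero_lt_one.trans_le (one_le_geomPartDeriv hk hx)

theorem geomPartDeriv_le (hx : 1 ≤ x) :
    geomPartDeriv k x ≤ geomPartDeriv k 1 * x ^ (k - 2) := by
  simp only [geomPartDeriv, one_pow, mul_one, Finset.sum_mul]
  refine Finset.sum_le_sum fun i hi => ?_
  have := Finset.mem_Ico.1 hi
  exact mul_le_mul_of_nonneg_left (pow_le_pow_right₀ hx (by omega)) (Nat.cast_nonneg i)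

theorem two_mul_geomPartDeriv_one (hk : 1 ≤ k) : 2 * geomPartDeriv k 1 = k * (k - 1) := by
  have hsum : (∑ i ∈ Finset.Ico 1 k, i) * 2 = k * (k - 1) := by
    rw [← Finset.sum_range_id_mul_two, Finset.range_eq_Ico, Finset.sum_eq_sum_Ico_succ_bot hk,
      zero_add]
  have hcast := congrArg (Nat.cast : ℕ → ℝ) hsum
  push_cast [Nat.cast_sub hk] at hcast
  simp only [geomPartDeriv, one_pow, mul_one]
  linarith

theorem strictMonoOn_pow_div_geomPartDeriv (hk : 2 ≤ k) :
    StrictMonoOn (fun x => x ^ (k - 1) / geomPartDeriv k x) (Ioi 0) := by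
  intro x (hx : 0 < x) y (hy : 0 < y) hxy
  rw [div_lt_div_iff₀ (geomPartDeriv_pos hk hx.le) (geomPartDeriv_pos hk hy.le), geomPartDeriv,
    geomPartDeriv, Finset.mul_sum, Finset.mul_sum]
  refine Finset.sum_lt_sum_of_nonempty ⟨1, Finset.mem_Ico.2 ⟨le_rfl, hk⟩⟩ fun i hi => ?_
  obtain ⟨hi1, hik⟩ := Finset.mem_Ico.1 hi
  have hsplit : ∀ a b : ℝ,
      a ^ (k - 1) * (i * b ^ (i - 1)) = i * (a * b) ^ (i - 1) * a ^ (k - i) := by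
    intro a b
    rw [show k - 1 = (i - 1) + (k - i) by omega, pow_add, mul_pow]
    ring
  rw [hsplit x y, hsplit y x, mul_comm y x]
  have hi : (0 : ℝ) < i := by exact_mod_cast hi1
  exact mul_lt_mul_of_pos_left (pow_lt_pow_left₀ hxy hx.le (by omega)) (by positivity)

theorem exists_pow_div_geomPartDeriv_eq (hk : 2 ≤ k) {c : ℝ} (hc : 0 < c) :
    ∃ m, 0 < m ∧ m ^ (k - 1) / geomPartDeriv k m = c := by
  set E₁ := geomPartDeriv k 1
  have hE₁ : 1 ≤ E₁ := one_le_geomPartDeriv hk zero_le_one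
  set b := 1 + c * E₁
  have hb : 1 ≤ b := by nlinarith
  have hcont : ContinuousOn (fun x => x ^ (k - 1) / geomPartDeriv k x) (Icc 0 b) :=
    (continuous_pow _).continuousOn.div (continuous_geomPartDeriv k).continuousOn
      fun x hx => (geomPartDeriv_pos hk hx.1).ne'
  have hc_lt : c < b ^ (k - 1) / geomPartDeriv k b := by
    have hbk : b ^ (k - 1) = b ^ (k - 2) * b := by rw [← pow_succ]; congr 1; omega
    rw [lt_div_iff₀ (geomPartDeriv_pos hk (zero_le_one.trans hb)), hbk]
    calc c * geomPartDeriv k b ≤ c * (E₁ * b ^ (k - 2)) :=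
          mul_le_mul_of_nonneg_left (geomPartDeriv_le hb) hc.le
      _ < b ^ (k - 2) * b := by nlinarith [pow_pos (zero_lt_one.trans_le hb) (k - 2)]
  obtain ⟨m, ⟨hm0, -⟩, hm⟩ := intermediate_value_Icc (zero_le_one.trans hb) hcont
    ⟨by simpa [zero_pow (by omega : k - 1 ≠ 0)] using hc.le, hc_lt.le⟩
  refine ⟨m, hm0.lt_of_ne ?_, hm⟩
  rintro rfl
  simp [zero_pow (by omega : k - 1 ≠ 0), hc.ne] at hm

noncomputable def cofactor (k : ℕ) (τ x : ℝ) : ℝ := 2 * x ^ k + 1 - (τ - 2) * geomPart k x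

noncomputable def threshold (k : ℕ) (x : ℝ) : ℝ := 2 + (2 * x ^ k + 1) / geomPart k x

variable {τ : ℝ}

theorem sub_one_mul_cofactor (hk : 1 ≤ k) (τ x : ℝ) :
    (x - 1) * cofactor k τ x = 2 * x ^ (k + 1) - τ * x ^ k + (τ - 1) * x - 1 := by
  unfold cofactor
  linear_combination (2 - τ) * geomPart_mul_sub_one hk x

theorem posRoots_eq_insert (hk : 1 ≤ k) (τ : ℝ) :
    {x : ℝ | 0 < x ∧ 2 * x ^ (k + 1) - τ * x ^ k + (τ - 1) * x - 1 = 0} =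
      insert 1 (posZeros (cofactor k τ)) := by
  ext x
  simp only [← sub_one_mul_cofactor hk, mul_eq_zero, sub_eq_zero, posZeros, mem_ofPred_eq,
    mem_insert_iff]
  constructor
  · rintro ⟨hx, h | h⟩
    exacts [Or.inl h, Or.inr ⟨hx, h⟩]
  · rintro (rfl | ⟨hx, h⟩)
    exacts [⟨one_pos, Or.inl rfl⟩, ⟨hx, Or.inr h⟩]

theorem cofactor_eq_add_mul_geomPart (hk : 1 ≤ k) (τ x : ℝ) :
    cofactor k τ x = 2 * x + 1 + (2 * x - τ) * geomPart k x := by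
  unfold cofactor
  linear_combination (-2) * geomPart_mul_sub_one hk x

theorem cofactor_zero (hk : 1 ≤ k) (τ : ℝ) : cofactor k τ 0 = 1 := by
  simp [cofactor_eq_add_mul_geomPart hk, geomPart_zero]

theorem cofactor_eq_geomPart_mul (hk : 2 ≤ k) (hx : 0 < x) :
    cofactor k τ x = geomPart k x * (threshold k x - τ) := by
  have := (geomPart_pos hk hx).ne'
  unfold cofactor threshold
  field_simp
  ring

theorem lt_threshold_iff (hk : 2 ≤ k) (hx : 0 < x) :
    τ < threshold k x ↔ 0 < cofactor k τ x := by
  rw [cofactor_eq_geomPart_mul hk hx, mul_pos_iff_of_pos_left (geomPart_pos hk hx), sub_pos]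

theorem two_lt_threshold (hk : 2 ≤ k) (hx : 0 < x) : 2 < threshold k x := by
  have := geomPart_pos hk hx
  unfold threshold
  have : 0 < (2 * x ^ k + 1) / geomPart k x := by positivity
  linarith

theorem two_mul_lt_threshold (hk : 2 ≤ k) (hx : 0 < x) : 2 * x < threshold k x := by
  rw [lt_threshold_iff hk hx, cofactor_eq_add_mul_geomPart (by omega)]
  simp only [sub_self, zero_mul, add_zero]
  linarith

theorem inv_add_one_lt_threshold (hk : 2 ≤ k) (hx : 0 < x) : x⁻¹ + 1 < threshold k x := by
  rw [lt_threshold_iff hk hx]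
  have : x * cofactor k (x⁻¹ + 1) x = 2 * x ^ (k + 1) + x ^ k := by
    unfold cofactor
    have := geomPart_mul_sub_one (k := k) (by omega) x
    field_simp
    linear_combination this
  have : 0 < x * cofactor k (x⁻¹ + 1) x := by rw [this]; positivity
  exact pos_of_mul_pos_right this hx.le

theorem threshold_one (hk : 2 ≤ k) : threshold k 1 = (2 * k + 1) / (k - 1) := by
  have : (k : ℝ) - 1 ≠ 0 := by
    have : (2 : ℝ) ≤ k := by exact_mod_cast hk
    linarith
  rw [threshold, geomPart_one (by omega)]
  field_simp
  ring

theorem exists_isMinOn_threshold (hk : 2 ≤ k) :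
    ∃ xs, 0 < xs ∧ IsMinOn (threshold k) (Ioi 0) xs := by
  set T := threshold k 1
  have hT : 2 < T := two_lt_threshold hk one_pos
  have hT₀ : 0 < T⁻¹ := by positivity
  have hcont : ContinuousOn (threshold k) (Icc T⁻¹ (T / 2)) := by
    refine continuousOn_const.add (ContinuousOn.div (by fun_prop) ?_ ?_)
    · exact fun x _ => (hasDerivAt_geomPart k x).continuousAt.continuousWithinAt
    · exact fun x hx => (geomPart_pos hk (hT₀.trans_le hx.1)).ne'
  have h1 : (1 : ℝ) ∈ Icc T⁻¹ (T / 2) :=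
    ⟨inv_le_one_of_one_le₀ (by linarith), by linarith⟩
  have hout : ∀ x ∈ Ioi 0 \ Icc T⁻¹ (T / 2), T ≤ threshold k x := by
    rintro x ⟨hx : 0 < x, hxK⟩
    rcases not_and_or.1 hxK with hx' | hx'
    · have := inv_add_one_lt_threshold hk hx
      have : T < x⁻¹ := lt_inv_of_lt_inv₀ hx (not_le.1 hx')
      linarith
    · linarith [two_mul_lt_threshold hk hx, not_le.1 hx']
  obtain ⟨xs, hxs, hmin⟩ := isCompact_Icc.exists_isMinOn_of_le_of_notMem hcont h1 hout
  exact ⟨xs, hT₀.trans_le hxs.1, hmin⟩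

theorem hasDerivAt_cofactor (k : ℕ) (τ x : ℝ) :
    HasDerivAt (cofactor k τ) (2 * k * x ^ (k - 1) - (τ - 2) * geomPartDeriv k x) x := by
  have h := (((hasDerivAt_pow k x).const_mul 2).add_const 1).sub
    ((hasDerivAt_geomPart k x).const_mul (τ - 2))
  rw [mul_assoc]
  exact h

theorem continuous_cofactor (k : ℕ) (τ : ℝ) : Continuous (cofactor k τ) :=
  continuous_iff_continuousAt.2 fun x => (hasDerivAt_cofactor k τ x).continuousAt

theorem exists_strictAntiOn_strictMonoOn_cofactor (hk : 2 ≤ k) (hτ : 2 < τ) :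
    ∃ m, 0 < m ∧
      StrictAntiOn (cofactor k τ) (Icc 0 m) ∧ StrictMonoOn (cofactor k τ) (Ici m) := by
  have hk0 : (0 : ℝ) < k := by positivity
  obtain ⟨m, hm, hρm⟩ :=
    exists_pow_div_geomPartDeriv_eq hk (c := (τ - 2) / (2 * k))
      (div_pos (sub_pos.2 hτ) (by positivity))
  have hcont := continuous_cofactor k τ
  have hderiv : ∀ x, 0 < x → deriv (cofactor k τ) x = 2 * k * geomPartDeriv k x *
      (x ^ (k - 1) / geomPartDeriv k x - m ^ (k - 1) / geomPartDeriv k m) := by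
    intro x hx
    have := (geomPartDeriv_pos hk hx.le).ne'
    rw [(hasDerivAt_cofactor k τ x).deriv, hρm]
    field_simp
  have hE : ∀ x, 0 < x → 0 < 2 * k * geomPartDeriv k x := fun x hx =>
    mul_pos (by positivity) (geomPartDeriv_pos hk hx.le)
  refine ⟨m, hm, strictAntiOn_of_deriv_neg (convex_Icc 0 m) hcont.continuousOn fun x hx => ?_,
    strictMonoOn_of_deriv_pos (convex_Ici m) hcont.continuousOn fun x hx => ?_⟩
  · rw [interior_Icc] at hx
    rw [hderiv x hx.1]
    exact mul_neg_of_pos_of_neg (hE x hx.1)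
      (sub_neg.2 (strictMonoOn_pow_div_geomPartDeriv hk hx.1 hm hx.2))
  · rw [interior_Ici] at hx
    have hx0 : 0 < x := hm.trans hx
    rw [hderiv x hx0]
    exact mul_pos (hE x hx0) (sub_pos.2 (strictMonoOn_pow_div_geomPartDeriv hk hm hx0 hx))

variable {xs : ℝ}

theorem threshold_lt_threshold_one_of_isMinOn (hk : 2 ≤ k)
    (hxs : IsMinOn (threshold k) (Ioi 0) xs) : threshold k xs < threshold k 1 := by
  refine (hxs (mem_Ioi.2 one_pos)).lt_of_ne fun heq => ?_
  have hmin : IsMinOn (cofactor k (threshold k 1)) (Ioi 0) 1 := fun x (hx : 0 < x) => by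
    simp only [mem_ofPred_eq, cofactor_eq_geomPart_mul hk one_pos, cofactor_eq_geomPart_mul hk hx,
      sub_self, mul_zero]
    exact mul_nonneg (geomPart_pos hk hx).le (sub_nonneg.2 (heq ▸ hxs hx))
  have hderiv := (hmin.isLocalMin (Ioi_mem_nhds one_pos)).hasDerivAt_eq_zero
    (hasDerivAt_cofactor k _ 1)
  have hk1 : (k : ℝ) - 1 ≠ 0 := by
    have : (2 : ℝ) ≤ k := by exact_mod_cast hk
    linarith
  have hk0 : (k : ℝ) ≠ 0 := by positivity
  rw [threshold_one hk, one_pow, mul_one] at hderiv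
  have h2 := two_mul_geomPartDeriv_one (k := k) (by omega)
  -- `hderiv` says that the derivative `k / 2` of `cofactor k τ₀` at `1` vanishes
  field_simp at hderiv
  rw [show 2 * (k : ℝ) + 1 - 2 * (k - 1) = 3 by ring] at hderiv
  exact mul_ne_zero hk0 hk1 (by linarith)

theorem posZeros_cofactor_eq_empty (hk : 2 ≤ k) (hxs : IsMinOn (threshold k) (Ioi 0) xs)
    (hτ : τ < threshold k xs) : posZeros (cofactor k τ) = ∅ :=
  eq_empty_of_forall_notMem fun _ ⟨hx, hfx⟩ =>
    ((lt_threshold_iff hk hx).1 (hτ.trans_le (hxs hx))).ne' hfx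

theorem posZeros_cofactor_threshold_eq_singleton (hk : 2 ≤ k) (hxs₀ : 0 < xs)
    (hxs : IsMinOn (threshold k) (Ioi 0) xs) : posZeros (cofactor k (threshold k xs)) = {xs} := by
  obtain ⟨m, hm, hanti, hmono⟩ :=
    exists_strictAntiOn_strictMonoOn_cofactor hk (two_lt_threshold hk hxs₀)
  have hzero : cofactor k (threshold k xs) xs = 0 := by
    rw [cofactor_eq_geomPart_mul hk hxs₀, sub_self, mul_zero]
  have hm0 : cofactor k (threshold k xs) m = 0 := by
    refine le_antisymm ?_ ?_
    · exact hzero ▸ isMinOn_of_strictAntiOn_of_strictMonoOn hanti hmono hm.le hxs₀.le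
    · rw [cofactor_eq_geomPart_mul hk hm]
      exact mul_nonneg (geomPart_pos hk hm).le (sub_nonneg.2 (hxs hm))
  have h := posZeros_eq_singleton hanti hmono hm hm0
  rw [h, eq_of_mem_singleton (h ▸ ⟨hxs₀, hzero⟩ : xs ∈ ({m} : Set ℝ))]

theorem ncard_posZeros_cofactor_eq_two (hk : 2 ≤ k) (hx : 0 < x) (hτ : threshold k x < τ) :
    (posZeros (cofactor k τ)).ncard = 2 := by
  obtain ⟨m, hm, hanti, hmono⟩ :=
    exists_strictAntiOn_strictMonoOn_cofactor hk ((two_lt_threshold hk hx).trans hτ)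
  have hneg : cofactor k τ x < 0 := by
    rw [cofactor_eq_geomPart_mul hk hx]
    exact mul_neg_of_pos_of_neg (geomPart_pos hk hx) (sub_neg.2 hτ)
  have hτpos : 0 < τ := by linarith [two_lt_threshold hk hx]
  have hpos : 0 < cofactor k τ (m + τ / 2) := by
    have := geomPart_pos hk (by positivity : 0 < m + τ / 2)
    rw [cofactor_eq_add_mul_geomPart (by omega), show 2 * (m + τ / 2) - τ = 2 * m by ring]
    positivity
  refine ncard_posZeros_eq_two (continuous_cofactor k τ).continuousOn hanti hmono hm.le
    (by rw [cofactor_zero (by omega)]; exact one_pos)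
    ((isMinOn_of_strictAntiOn_of_strictMonoOn hanti hmono hm.le hx.le).trans_lt hneg)
    (by linarith) hpos

theorem one_mem_posZeros_cofactor_iff (hk : 2 ≤ k) :
    1 ∈ posZeros (cofactor k τ) ↔ τ = threshold k 1 := by
  simp only [posZeros, mem_ofPred_eq, zero_lt_one, true_and]
  rw [cofactor_eq_geomPart_mul hk one_pos, mul_eq_zero_iff_left (geomPart_pos hk one_pos).ne',
    sub_eq_zero, eq_comm]

end SOSThreePeriodic

open SOSThreePeriodic in
/-- For each `k ≥ 2` there is exactly one critical value `τ_c` with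
`2 < τ_c < τ₀ = (2k+1)/(k−1)` such that the equation
`2x^(k+1) − τx^k + (τ−1)x − 1 = 0` in `x > 0` has:
a unique positive solution if `τ < τ_c`; exactly two if `τ = τ_c`;
exactly three if `τ > τ_c` and `τ ≠ τ₀`; exactly two if `τ = τ₀`.
In each case `x = 1` is a solution. -/
theorem sos_three_periodic_critical_value
    (k : ℕ) (hk : 2 ≤ k) :
    ∃! τc : ℝ, 2 < τc ∧ τc < (2 * (k : ℝ) + 1) / ((k : ℝ) - 1) ∧
      (∀ τ : ℝ, 2 < τ → τ < τc →
        {x : ℝ | 0 < x ∧ 2 * x ^ (k + 1) - τ * x ^ k + (τ - 1) * x - 1 = 0}.ncard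
          = 1) ∧
      ({x : ℝ | 0 < x ∧ 2 * x ^ (k + 1) - τc * x ^ k + (τc - 1) * x - 1 = 0}.ncard
          = 2) ∧
      (∀ τ : ℝ, 2 < τ → τc < τ → τ ≠ (2 * (k : ℝ) + 1) / ((k : ℝ) - 1) →
        {x : ℝ | 0 < x ∧ 2 * x ^ (k + 1) - τ * x ^ k + (τ - 1) * x - 1 = 0}.ncard
          = 3) ∧
      ({x : ℝ | 0 < x ∧
          2 * x ^ (k + 1) - ((2 * (k : ℝ) + 1) / ((k : ℝ) - 1)) * x ^ k +
            ((2 * (k : ℝ) + 1) / ((k : ℝ) - 1) - 1) * x - 1 = 0}.ncard = 2) ∧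
      (∀ τ : ℝ, 2 < τ →
        (1 : ℝ) ∈ {x : ℝ | 0 < x ∧
          2 * x ^ (k + 1) - τ * x ^ k + (τ - 1) * x - 1 = 0}) := by
  simp only [posRoots_eq_insert (by omega : 1 ≤ k), ← threshold_one hk]
  obtain ⟨xs, hxs₀, hxs⟩ := exists_isMinOn_threshold hk
  have hlt := threshold_lt_threshold_one_of_isMinOn hk hxs
  have hbelow : ∀ τ, τ < threshold k xs → (insert 1 (posZeros (cofactor k τ))).ncard = 1 :=
    fun τ hτ => by simp [posZeros_cofactor_eq_empty hk hxs hτ]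
  have habove : ∀ τ, threshold k xs < τ → τ ≠ threshold k 1 →
      (insert 1 (posZeros (cofactor k τ))).ncard = 3 := fun τ hτ hτ₁ => by
    have h2 := ncard_posZeros_cofactor_eq_two hk hxs₀ hτ
    rw [ncard_insert_of_notMem (mt (one_mem_posZeros_cofactor_iff hk).1 hτ₁)
      (finite_of_ncard_ne_zero (by omega)), h2]
  refine ⟨threshold k xs, ⟨two_lt_threshold hk hxs₀, hlt, fun τ _ => hbelow τ, ?_,
    fun τ _ => habove τ, ?_, fun _ _ => mem_insert 1 _⟩, ?_⟩
  · rw [posZeros_cofactor_threshold_eq_singleton hk hxs₀ hxs, ncard_pair]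
    rintro rfl
    exact hlt.ne rfl
  · rw [insert_eq_of_mem ((one_mem_posZeros_cofactor_iff hk).2 rfl),
      ncard_posZeros_cofactor_eq_two hk hxs₀ hlt]
  · rintro τ ⟨-, hτ₁, -, hτ, -⟩
    rcases lt_trichotomy τ (threshold k xs) with h | h | h
    · simp [hbelow τ h] at hτ
    · exact h
    · simp [habove τ h hτ₁.ne] at hτ
end

section
/- Let k = 2 and let τ ≥ 4 be a real number. Set x_1 = (τ + √(τ² − 4τ + 4√(τ² − 4τ)))/4 and x_2 = (τ − √(τ² − 4τ + 4√(τ² − 4τ)))/4. Then for i = 1, 2 the number x_i is positive, satisfies 2x_i − τ < 0, the value y_i = g(x_i) = (2x_i − τ)·x_i² + τ·x_i − 1 is positive, and the pair (x_i, y_i) satisfies the system x = (2x−τ)·y² + τ·y − x and y = (2x−τ)·x² + τ·x − 1. -/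
set_option maxHeartbeats 1000000

/-- Key algebraic lemma: if `4x² = 2τx + s − τ` and `s² = τ² − 4τ`,
then `y = g(x)` equals `x(τ+s)/2 − 1` and `(x,y)` solves the first equation. -/
lemma sos_key (τ s x y : ℝ) (hs2 : s ^ 2 = τ ^ 2 - 4 * τ)
    (h1 : 4 * x ^ 2 = 2 * τ * x + s - τ)
    (hy : y = (2 * x - τ) * x ^ 2 + τ * x - 1) :
    y = x * (τ + s) / 2 - 1 ∧ x = (2 * x - τ) * y ^ 2 + τ * y - x := by
  have hy' : y = x * (τ + s) / 2 - 1 := by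
    rw [hy]; linear_combination (x / 2) * h1
  refine ⟨hy', ?_⟩
  rw [hy']
  linear_combination (-(x * (τ ^ 2 + τ * s - 2 * τ) / 4) + (τ + s) / 2) * h1 +
    (-((2 * x - τ) * x ^ 2 / 4) - τ * x / 4 + 1 / 2) * hs2

/-- For `k = 2` and `τ ≥ 4`, the numbers
`x₁ = (τ + √(τ² − 4τ + 4√(τ² − 4τ)))/4` and
`x₂ = (τ − √(τ² − 4τ + 4√(τ² − 4τ)))/4` are positive, satisfy `2xᵢ − τ < 0`,
have `yᵢ = g(xᵢ) = (2xᵢ − τ)xᵢ² + τxᵢ − 1 > 0`, and the pairs `(xᵢ, yᵢ)`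
solve the system `x = (2x−τ)y² + τy − x`, `y = (2x−τ)x² + τx − 1`. -/
theorem sos_four_periodic_solutions_k2_first
    (τ : ℝ) (hτ : 4 ≤ τ)
    (x₁ x₂ : ℝ)
    (hx₁ : x₁ = (τ + Real.sqrt (τ ^ 2 - 4 * τ + 4 * Real.sqrt (τ ^ 2 - 4 * τ))) / 4)
    (hx₂ : x₂ = (τ - Real.sqrt (τ ^ 2 - 4 * τ + 4 * Real.sqrt (τ ^ 2 - 4 * τ))) / 4)
    (y₁ y₂ : ℝ)
    (hy₁ : y₁ = (2 * x₁ - τ) * x₁ ^ 2 + τ * x₁ - 1)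
    (hy₂ : y₂ = (2 * x₂ - τ) * x₂ ^ 2 + τ * x₂ - 1) :
    (0 < x₁ ∧ 2 * x₁ - τ < 0 ∧ 0 < y₁ ∧
      x₁ = (2 * x₁ - τ) * y₁ ^ 2 + τ * y₁ - x₁ ∧
      y₁ = (2 * x₁ - τ) * x₁ ^ 2 + τ * x₁ - 1) ∧
    (0 < x₂ ∧ 2 * x₂ - τ < 0 ∧ 0 < y₂ ∧
      x₂ = (2 * x₂ - τ) * y₂ ^ 2 + τ * y₂ - x₂ ∧
      y₂ = (2 * x₂ - τ) * x₂ ^ 2 + τ * x₂ - 1) := by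
  set s : ℝ := Real.sqrt (τ ^ 2 - 4 * τ) with hsdef
  have hτ0 : (0:ℝ) < τ := by linarith
  have hparent : 0 ≤ τ ^ 2 - 4 * τ := by nlinarith
  have hs0 : 0 ≤ s := Real.sqrt_nonneg _
  have hs2 : s ^ 2 = τ ^ 2 - 4 * τ := Real.sq_sqrt hparent
  have hsτ : s < τ := by nlinarith
  set d : ℝ := Real.sqrt (τ ^ 2 - 4 * τ + 4 * s) with hddef
  have hD : 0 ≤ τ ^ 2 - 4 * τ + 4 * s := by linarith
  have hd0 : 0 ≤ d := Real.sqrt_nonneg _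
  have hd2 : d ^ 2 = τ ^ 2 - 4 * τ + 4 * s := Real.sq_sqrt hD
  have hdτ : d < τ := by nlinarith
  -- the quadratic relation satisfied by both roots
  have h1₁ : 4 * x₁ ^ 2 = 2 * τ * x₁ + s - τ := by
    rw [hx₁]; linear_combination (1 / 4) * hd2
  have h1₂ : 4 * x₂ ^ 2 = 2 * τ * x₂ + s - τ := by
    rw [hx₂]; linear_combination (1 / 4) * hd2
  obtain ⟨hy₁', heq₁⟩ := sos_key τ s x₁ y₁ hs2 h1₁ hy₁
  obtain ⟨hy₂', heq₂⟩ := sos_key τ s x₂ y₂ hs2 h1₂ hy₂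
  have hx₁pos : 0 < x₁ := by rw [hx₁]; linarith
  have hx₂pos : 0 < x₂ := by rw [hx₂]; linarith
  have hy₁pos : 0 < y₁ := by
    rw [hy₁']
    have : (1:ℝ) ≤ x₁ := by rw [hx₁]; linarith
    nlinarith
  have haux : (τ - d) * (τ + d) * (τ + s) = 16 * τ := by
    linear_combination (-(τ + s)) * hd2 + (-4) * hs2
  have hy₂pos : 0 < y₂ := by
    have hP : 8 < (τ - d) * (τ + s) := by nlinarith [haux, hdτ, hd0, hτ0]
    rw [hy₂', hx₂]
    nlinarith [hP]
  refine ⟨⟨hx₁pos, by rw [hx₁]; linarith, hy₁pos, heq₁, hy₁⟩,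
    ⟨hx₂pos, by rw [hx₂]; linarith, hy₂pos, heq₂, hy₂⟩⟩
end

section
/- Let k = 2 and let τ ≥ 2(1 + √5) be a real number. Set x_3 = (τ + √(τ² − 4τ − 4√(τ² − 4τ)))/4 and x_4 = (τ − √(τ² − 4τ − 4√(τ² − 4τ)))/4. Then for i = 3, 4 the number x_i is positive, satisfies 2x_i − τ < 0, the value y_i = g(x_i) = (2x_i − τ)·x_i² + τ·x_i − 1 is positive, and the pair (x_i, y_i) satisfies the system x = (2x−τ)·y² + τ·y − x and y = (2x−τ)·x² + τ·x − 1. -/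
lemma sos_key_eq (τ s x y : ℝ) (hP : 4*x^2 - 2*τ*x + τ + s = 0)
    (hs : s^2 = τ^2 - 4*τ) (hy : y = (2*x - τ)*x^2 + τ*x - 1) :
    x = (2*x - τ) * y^2 + τ*y - x := by
  have hyy : y = (τ - s)*x/2 - 1 := by linear_combination hy + x/2 * hP
  rw [hyy]
  linear_combination (-(τ-s)^2/8*x + (τ-s)/2) * hP + (-(τ-s)*x/8 + 1/2) * hs

lemma sos_y_pos (τ s x y : ℝ) (hy : y = (τ - s)*x/2 - 1)
    (hu : 2 < τ - s) (hx : (τ - s + 2)/4 ≤ x) : 0 < y := by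
  nlinarith [mul_pos (by linarith : (0:ℝ) < τ - s) (by linarith : (0:ℝ) < τ - s - 2)]

/-- For `k = 2` and `τ ≥ 2(1 + √5)`, the numbers
`x₃ = (τ + √(τ² − 4τ − 4√(τ² − 4τ)))/4` and
`x₄ = (τ − √(τ² − 4τ − 4√(τ² − 4τ)))/4` are positive, satisfy `2xᵢ − τ < 0`,
have `yᵢ = g(xᵢ) = (2xᵢ − τ)xᵢ² + τxᵢ − 1 > 0`, and the pairs `(xᵢ, yᵢ)`
solve the system `x = (2x−τ)y² + τy − x`, `y = (2x−τ)x² + τx − 1`. -/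
theorem sos_four_periodic_solutions_k2_second
    (τ : ℝ) (hτ : 2 * (1 + Real.sqrt 5) ≤ τ)
    (x₃ x₄ : ℝ)
    (hx₃ : x₃ = (τ + Real.sqrt (τ ^ 2 - 4 * τ - 4 * Real.sqrt (τ ^ 2 - 4 * τ))) / 4)
    (hx₄ : x₄ = (τ - Real.sqrt (τ ^ 2 - 4 * τ - 4 * Real.sqrt (τ ^ 2 - 4 * τ))) / 4)
    (y₃ y₄ : ℝ)
    (hy₃ : y₃ = (2 * x₃ - τ) * x₃ ^ 2 + τ * x₃ - 1)
    (hy₄ : y₄ = (2 * x₄ - τ) * x₄ ^ 2 + τ * x₄ - 1) :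
    (0 < x₃ ∧ 2 * x₃ - τ < 0 ∧ 0 < y₃ ∧
      x₃ = (2 * x₃ - τ) * y₃ ^ 2 + τ * y₃ - x₃ ∧
      y₃ = (2 * x₃ - τ) * x₃ ^ 2 + τ * x₃ - 1) ∧
    (0 < x₄ ∧ 2 * x₄ - τ < 0 ∧ 0 < y₄ ∧
      x₄ = (2 * x₄ - τ) * y₄ ^ 2 + τ * y₄ - x₄ ∧
      y₄ = (2 * x₄ - τ) * x₄ ^ 2 + τ * x₄ - 1) := by
  set s := Real.sqrt (τ ^ 2 - 4 * τ) with hsdef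
  set d := Real.sqrt (τ ^ 2 - 4 * τ - 4 * s) with hddef
  have h5 : Real.sqrt 5 ^ 2 = 5 := Real.sq_sqrt (by norm_num)
  have h5pos : (2:ℝ) ≤ Real.sqrt 5 := by
    nlinarith [Real.sqrt_nonneg 5, h5]
  have hτ6 : (6:ℝ) ≤ τ := by nlinarith
  have hs16 : (16:ℝ) ≤ τ ^ 2 - 4 * τ := by nlinarith [Real.sqrt_nonneg 5]
  have hs0 : 0 ≤ s := Real.sqrt_nonneg _
  have hs2 : s ^ 2 = τ ^ 2 - 4 * τ := Real.sq_sqrt (by linarith)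
  have hs4 : (4:ℝ) ≤ s := by nlinarith
  have hst : s < τ - 2 := by nlinarith
  have hd0 : 0 ≤ d := Real.sqrt_nonneg _
  have hd2 : d ^ 2 = τ ^ 2 - 4 * τ - 4 * s := Real.sq_sqrt (by nlinarith)
  have hds : d < s - 2 := by nlinarith
  have hdτ : d < τ := by linarith
  -- key quadratic relations
  have hP₃ : 4*x₃^2 - 2*τ*x₃ + τ + s = 0 := by
    rw [hx₃]; linear_combination hd2 / 4
  have hP₄ : 4*x₄^2 - 2*τ*x₄ + τ + s = 0 := by
    rw [hx₄]; linear_combination hd2 / 4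
  have hyy₃ : y₃ = (τ - s)*x₃/2 - 1 := by linear_combination hy₃ + x₃/2 * hP₃
  have hyy₄ : y₄ = (τ - s)*x₄/2 - 1 := by linear_combination hy₄ + x₄/2 * hP₄
  have hu : 2 < τ - s := by linarith
  have hxl₃ : (τ - s + 2)/4 ≤ x₃ := by rw [hx₃]; linarith
  have hxl₄ : (τ - s + 2)/4 ≤ x₄ := by rw [hx₄]; linarith
  refine ⟨⟨?_, ?_, ?_, ?_, hy₃⟩, ⟨?_, ?_, ?_, ?_, hy₄⟩⟩
  · rw [hx₃]; linarith
  · rw [hx₃]; linarith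
  · exact sos_y_pos τ s x₃ y₃ hyy₃ hu hxl₃
  · exact sos_key_eq τ s x₃ y₃ hP₃ hs2 hy₃
  · rw [hx₄]; linarith
  · rw [hx₄]; linarith
  · exact sos_y_pos τ s x₄ y₄ hyy₄ hu hxl₄
  · exact sos_key_eq τ s x₄ y₄ hP₄ hs2 hy₄
end

section
/- Let k ≥ 2 be an integer and τ > 2 a real number, and set τ_1 = 2k/(k−1). Consider the equation y^k − (τ−2)·∑_{j=1}^{k−1} y^j + 1 = 0 in the unknown y > 0. Then: (i) if τ < τ_1 the equation has no positive solution; (ii) if τ = τ_1 it has exactly one positive solution; (iii) if τ > τ_1 it has exactly two positive solutions. -/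
theorem reflect_sum' (k : ℕ) (hk : 2 ≤ k) (f : ℕ → ℝ) :
    ∑ j ∈ Finset.Icc 1 (k-1), f (k - j) = ∑ j ∈ Finset.Icc 1 (k-1), f j := by
  apply Finset.sum_nbij' (fun j => k - j) (fun j => k - j) <;>
    (simp only [Finset.mem_Icc]; intros) <;> first | trivial | omega

theorem keyA (k : ℕ) (hk : 2 ≤ k) (y : ℝ) :
    ∑ j ∈ Finset.Icc 1 (k-1), (y^j - 1)*(y^(k-j) - 1)
      = ((k:ℝ)-1)*(y^k+1) - 2*∑ j ∈ Finset.Icc 1 (k-1), y^j := by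
  have h1 : ∀ j ∈ Finset.Icc 1 (k-1), (y^j - 1)*(y^(k-j) - 1)
      = (y^k + 1) - y^j - y^(k-j) := by
    intro j hj
    rw [Finset.mem_Icc] at hj
    have e : y^j * y^(k-j) = y^k := by rw [← pow_add]; congr 1; omega
    linear_combination e
  rw [Finset.sum_congr rfl h1, Finset.sum_sub_distrib, Finset.sum_sub_distrib,
    Finset.sum_const, reflect_sum' k hk (fun j => y^j), Nat.card_Icc]
  have h2 : (k - 1 + 1 - 1 : ℕ) = k - 1 := by omega
  rw [h2, nsmul_eq_mul, Nat.cast_sub (by omega : 1 ≤ k)]; push_cast; ring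

theorem keyB (k : ℕ) (hk : 2 ≤ k) (a b : ℝ) :
    (b^k+1) * (∑ j ∈ Finset.Icc 1 (k-1), a^j) - (a^k+1) * (∑ j ∈ Finset.Icc 1 (k-1), b^j)
      = ∑ j ∈ Finset.Icc 1 (k-1), (b^j - a^j)*((a*b)^(k-j) - 1) := by
  have h1 : ∀ j ∈ Finset.Icc 1 (k-1), (b^j - a^j)*((a*b)^(k-j) - 1)
      = a^(k-j) * b^k - b^(k-j) * a^k - b^j + a^j := by
    intro j hj
    rw [Finset.mem_Icc] at hj
    have e1 : a^j * a^(k-j) = a^k := by rw [← pow_add]; congr 1; omega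
    have e2 : b^j * b^(k-j) = b^k := by rw [← pow_add]; congr 1; omega
    linear_combination a^(k-j)*e2 - b^(k-j)*e1
  rw [Finset.sum_congr rfl h1]
  have r1 : ∑ j ∈ Finset.Icc 1 (k-1), a^(k-j) * b^k
      = (∑ j ∈ Finset.Icc 1 (k-1), a^j) * b^k := by
    rw [reflect_sum' k hk (fun j => a^j * b^k), Finset.sum_mul]
  have r2 : ∑ j ∈ Finset.Icc 1 (k-1), b^(k-j) * a^k
      = (∑ j ∈ Finset.Icc 1 (k-1), b^j) * a^k := by
    rw [reflect_sum' k hk (fun j => b^j * a^k), Finset.sum_mul]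
  simp only [Finset.sum_add_distrib, Finset.sum_sub_distrib, r1, r2]
  ring

theorem Icc_ne' (k : ℕ) (hk : 2 ≤ k) : (Finset.Icc 1 (k-1)).Nonempty :=
  ⟨1, by rw [Finset.mem_Icc]; omega⟩

theorem Spos (k : ℕ) (hk : 2 ≤ k) (y : ℝ) (hy : 0 < y) :
    0 < ∑ j ∈ Finset.Icc 1 (k-1), y^j :=
  Finset.sum_pos (fun j _ => pow_pos hy j) (Icc_ne' k hk)

theorem S_one' (k : ℕ) (hk : 2 ≤ k) :
    ∑ j ∈ Finset.Icc 1 (k-1), (1:ℝ)^j = (k:ℝ) - 1 := by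
  simp only [one_pow, Finset.sum_const, Nat.card_Icc, nsmul_eq_mul, mul_one]
  have h2 : (k - 1 + 1 - 1 : ℕ) = k - 1 := by omega
  rw [h2, Nat.cast_sub (by omega : 1 ≤ k)]; norm_num

theorem term_nonneg (k : ℕ) (y : ℝ) (hy : 0 < y) (j : ℕ) :
    0 ≤ (y^j - 1)*(y^(k-j) - 1) := by
  rcases le_total 1 y with h1 | h1
  · have a1 : (1:ℝ) ≤ y^j := one_le_pow₀ h1
    have a2 : (1:ℝ) ≤ y^(k-j) := one_le_pow₀ h1
    nlinarith
  · have a1 : y^j ≤ 1 := pow_le_one₀ hy.le h1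
    have a2 : y^(k-j) ≤ 1 := pow_le_one₀ hy.le h1
    nlinarith

theorem min_ineq (k : ℕ) (hk : 2 ≤ k) (y : ℝ) (hy : 0 < y) :
    2 * ∑ j ∈ Finset.Icc 1 (k-1), y^j ≤ ((k:ℝ)-1)*(y^k+1) := by
  have h : 0 ≤ ∑ j ∈ Finset.Icc 1 (k-1), (y^j - 1)*(y^(k-j) - 1) :=
    Finset.sum_nonneg (fun j _ => term_nonneg k y hy j)
  have := keyA k hk y
  linarith

theorem min_ineq_strict (k : ℕ) (hk : 2 ≤ k) (y : ℝ) (hy : 0 < y) (hy1 : y ≠ 1) :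
    2 * ∑ j ∈ Finset.Icc 1 (k-1), y^j < ((k:ℝ)-1)*(y^k+1) := by
  have h : 0 < ∑ j ∈ Finset.Icc 1 (k-1), (y^j - 1)*(y^(k-j) - 1) := by
    apply Finset.sum_pos' (fun j _ => term_nonneg k y hy j)
    refine ⟨1, by rw [Finset.mem_Icc]; omega, ?_⟩
    have hk1 : k - 1 ≠ 0 := by omega
    rcases lt_or_gt_of_ne hy1 with h1 | h1
    · have a1 : y^1 < 1 := by simpa using h1
      have a2 : y^(k-1) < 1 := pow_lt_one₀ hy.le h1 hk1
      nlinarith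
    · have a1 : (1:ℝ) < y^1 := by simpa using h1
      have a2 : (1:ℝ) < y^(k-1) := one_lt_pow₀ h1 hk1
      nlinarith
  have := keyA k hk y
  linarith

theorem mono_lem (k : ℕ) (hk : 2 ≤ k) (a b : ℝ) (ha : 1 ≤ a) (hab : a < b) :
    (a^k+1) * (∑ j ∈ Finset.Icc 1 (k-1), b^j)
      < (b^k+1) * (∑ j ∈ Finset.Icc 1 (k-1), a^j) := by
  have h : 0 < ∑ j ∈ Finset.Icc 1 (k-1), (b^j - a^j)*((a*b)^(k-j) - 1) := by
    apply Finset.sum_pos _ ⟨1, by rw [Finset.mem_Icc]; omega⟩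
    intro j hj
    rw [Finset.mem_Icc] at hj
    have hj0 : j ≠ 0 := by omega
    have h1 : a^j < b^j := pow_lt_pow_left₀ hab (by linarith) hj0
    have hab1 : 1 < a*b := by nlinarith
    have h2 : (1:ℝ) < (a*b)^(k-j) := one_lt_pow₀ hab1 (by omega)
    nlinarith
  have := keyB k hk a b
  linarith

theorem symm_lem (k : ℕ) (hk : 2 ≤ k) (c y : ℝ) (hy : 0 < y)
    (hE : y^k + 1 = c * ∑ j ∈ Finset.Icc 1 (k-1), y^j) :
    (1/y)^k + 1 = c * ∑ j ∈ Finset.Icc 1 (k-1), (1/y)^j := by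
  have hyne : y ≠ 0 := hy.ne'
  have hS : y^k * (∑ j ∈ Finset.Icc 1 (k-1), (1/y)^j) = ∑ j ∈ Finset.Icc 1 (k-1), y^j := by
    rw [Finset.mul_sum]
    calc ∑ j ∈ Finset.Icc 1 (k-1), y^k * (1/y)^j
        = ∑ j ∈ Finset.Icc 1 (k-1), y^(k-j) := by
          refine Finset.sum_congr rfl (fun j hj => ?_)
          rw [Finset.mem_Icc] at hj
          have e : y^(k-j) * y^j = y^k := by rw [← pow_add]; congr 1; omega
          rw [div_pow, one_pow, mul_one_div, eq_comm, eq_div_iff (pow_ne_zero j hyne)]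
          exact e
      _ = ∑ j ∈ Finset.Icc 1 (k-1), y^j := reflect_sum' k hk (fun j => y^j)
  have ek : y^k * (1/y)^k = 1 := by
    rw [div_pow, one_pow, mul_one_div, div_self (pow_ne_zero _ hyne)]
  apply mul_left_cancel₀ (pow_ne_zero k hyne)
  calc y^k * ((1/y)^k + 1) = y^k * (1/y)^k + y^k := by ring
    _ = 1 + y^k := by rw [ek]
    _ = c * ∑ j ∈ Finset.Icc 1 (k-1), y^j := by linarith
    _ = c * (y^k * ∑ j ∈ Finset.Icc 1 (k-1), (1/y)^j) := by rw [hS]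
    _ = y^k * (c * ∑ j ∈ Finset.Icc 1 (k-1), (1/y)^j) := by ring

theorem exists_gt (k : ℕ) (hk : 2 ≤ k) (c : ℝ) (hc : 2 < c * ((k:ℝ)-1)) :
    ∃ y : ℝ, 1 < y ∧ y^k + 1 = c * ∑ j ∈ Finset.Icc 1 (k-1), y^j := by
  have hK1 : (0:ℝ) < (k:ℝ) - 1 := by
    have : (2:ℝ) ≤ (k:ℝ) := by exact_mod_cast hk
    linarith
  have hcpos : 0 < c := by nlinarith
  have hcont : Continuous (fun y : ℝ => y^k + 1 - c * ∑ j ∈ Finset.Icc 1 (k-1), y^j) :=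
    ((continuous_pow k).add continuous_const).sub
      (continuous_const.mul (continuous_finset_sum _ fun j _ => continuous_pow j))
  have h1 : (1:ℝ)^k + 1 - c * ∑ j ∈ Finset.Icc 1 (k-1), (1:ℝ)^j < 0 := by
    rw [one_pow, S_one' k hk]; linarith
  set M : ℝ := c * ((k:ℝ)-1) + 1 with hM
  have hM1 : (1:ℝ) < M := by simp only [hM]; linarith
  have hMpos : (0:ℝ) < M := by linarith
  have hMk : M^k = M^(k-1) * M := by rw [← pow_succ]; congr 1; omega
  have hMk1pos : (0:ℝ) < M^(k-1) := pow_pos hMpos _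
  have hSM : ∑ j ∈ Finset.Icc 1 (k-1), M^j ≤ ((k:ℝ)-1) * M^(k-1) := by
    have h0 := Finset.sum_le_card_nsmul (Finset.Icc 1 (k-1)) (fun j => M^j) (M^(k-1))
      (fun j hj => by
        rw [Finset.mem_Icc] at hj
        exact pow_le_pow_right₀ hM1.le hj.2)
    rw [Nat.card_Icc] at h0
    have h2 : (k - 1 + 1 - 1 : ℕ) = k - 1 := by omega
    rw [h2, nsmul_eq_mul, Nat.cast_sub (by omega : 1 ≤ k)] at h0
    simpa using h0
  have hMh : 0 < M^k + 1 - c * ∑ j ∈ Finset.Icc 1 (k-1), M^j := by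
    have h3 : c * ∑ j ∈ Finset.Icc 1 (k-1), M^j ≤ c * (((k:ℝ)-1) * M^(k-1)) :=
      mul_le_mul_of_nonneg_left hSM hcpos.le
    have h4 : c * (((k:ℝ)-1) * M^(k-1)) = (M - 1) * M^(k-1) := by
      rw [hM]; ring
    nlinarith
  have hsub := intermediate_value_Icc hM1.le hcont.continuousOn
  obtain ⟨y, hyIcc, hy0⟩ := hsub ⟨h1.le, hMh.le⟩
  have hy0' : y^k + 1 - c * ∑ j ∈ Finset.Icc 1 (k-1), y^j = 0 := hy0
  have hy1 : 1 ≤ y := hyIcc.1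
  have hyne : y ≠ 1 := by
    intro he
    rw [he] at hy0'
    linarith
  exact ⟨y, lt_of_le_of_ne hy1 (Ne.symm hyne), by linarith⟩

/-- For `k ≥ 2`, `τ > 2` and `τ₁ = 2k/(k−1)`, the equation
`y^k − (τ−2)·(y + y² + … + y^(k−1)) + 1 = 0` in `y > 0` has:
no positive solution if `τ < τ₁`; exactly one positive solution if `τ = τ₁`;
exactly two positive solutions if `τ > τ₁`. -/
theorem sos_four_periodic_nonmirror_solution_count
    (k : ℕ) (hk : 2 ≤ k) (τ : ℝ) (hτ : 2 < τ) :
    (τ < 2 * (k : ℝ) / ((k : ℝ) - 1) →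
      {y : ℝ | 0 < y ∧
        y ^ k - (τ - 2) * (∑ j ∈ Finset.Icc 1 (k - 1), y ^ j) + 1 = 0} = ∅) ∧
    (τ = 2 * (k : ℝ) / ((k : ℝ) - 1) →
      {y : ℝ | 0 < y ∧
        y ^ k - (τ - 2) * (∑ j ∈ Finset.Icc 1 (k - 1), y ^ j) + 1 = 0}.ncard = 1) ∧
    (2 * (k : ℝ) / ((k : ℝ) - 1) < τ →
      {y : ℝ | 0 < y ∧
        y ^ k - (τ - 2) * (∑ j ∈ Finset.Icc 1 (k - 1), y ^ j) + 1 = 0}.ncard = 2) := by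
  have hK2 : (2:ℝ) ≤ (k:ℝ) := by exact_mod_cast hk
  have hK1 : (0:ℝ) < (k:ℝ) - 1 := by linarith
  have hc : (0:ℝ) < τ - 2 := by linarith
  refine ⟨?_, ?_, ?_⟩
  · -- case (i)
    intro hlt
    have hc2 : (τ-2)*((k:ℝ)-1) < 2 := by
      rw [lt_div_iff₀ hK1] at hlt
      nlinarith
    rw [Set.eq_empty_iff_forall_notMem]
    rintro y ⟨hy, heq⟩
    have hE : y^k + 1 = (τ-2) * ∑ j ∈ Finset.Icc 1 (k-1), y^j := by linarith
    have hS := Spos k hk y hy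
    have hmin := min_ineq k hk y hy
    have h3 : ((k:ℝ)-1)*(y^k+1) = ((τ-2)*((k:ℝ)-1)) * ∑ j ∈ Finset.Icc 1 (k-1), y^j := by
      rw [hE]; ring
    nlinarith [mul_lt_mul_of_pos_right hc2 hS]
  · -- case (ii)
    intro heq
    have hceq : (τ-2)*((k:ℝ)-1) = 2 := by
      rw [eq_div_iff hK1.ne'] at heq
      nlinarith
    have hset : {y : ℝ | 0 < y ∧
        y ^ k - (τ - 2) * (∑ j ∈ Finset.Icc 1 (k - 1), y ^ j) + 1 = 0} = {1} := by
      ext y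
      simp only [Set.mem_setOf_eq, Set.mem_singleton_iff]
      constructor
      · rintro ⟨hy, heq2⟩
        have hE : y^k + 1 = (τ-2) * ∑ j ∈ Finset.Icc 1 (k-1), y^j := by linarith
        by_contra hne
        have hstrict := min_ineq_strict k hk y hy hne
        have h3 : ((k:ℝ)-1)*(y^k+1) = 2 * ∑ j ∈ Finset.Icc 1 (k-1), y^j := by
          rw [hE]
          linear_combination (∑ j ∈ Finset.Icc 1 (k-1), y^j) * hceq
        linarith
      · intro h1
        subst h1
        refine ⟨one_pos, ?_⟩
        rw [one_pow, S_one' k hk]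
        linarith
    rw [hset, Set.ncard_singleton]
  · -- case (iii)
    intro hgt
    have hc2 : 2 < (τ-2)*((k:ℝ)-1) := by
      rw [div_lt_iff₀ hK1] at hgt
      nlinarith
    obtain ⟨y₀, hy₀1, hE₀⟩ := exists_gt k hk (τ-2) hc2
    have hy₀pos : (0:ℝ) < y₀ := by linarith
    have uniq : ∀ y : ℝ, 1 < y →
        y^k + 1 = (τ-2) * ∑ j ∈ Finset.Icc 1 (k-1), y^j → y = y₀ := by
      intro y hy hEy
      by_contra hne
      have hypos : (0:ℝ) < y := by linarith
      rcases lt_or_gt_of_ne hne with h | h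
      · have hm := mono_lem k hk y y₀ hy.le h
        rw [hEy, hE₀] at hm
        have e : (τ-2) * (∑ j ∈ Finset.Icc 1 (k-1), y^j) * (∑ j ∈ Finset.Icc 1 (k-1), y₀^j)
            = (τ-2) * (∑ j ∈ Finset.Icc 1 (k-1), y₀^j) * (∑ j ∈ Finset.Icc 1 (k-1), y^j) := by
          ring
        nlinarith
      · have hm := mono_lem k hk y₀ y hy₀1.le h
        rw [hEy, hE₀] at hm
        nlinarith
    have hset : {y : ℝ | 0 < y ∧
        y ^ k - (τ - 2) * (∑ j ∈ Finset.Icc 1 (k - 1), y ^ j) + 1 = 0} = {1/y₀, y₀} := by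
      ext y
      simp only [Set.mem_setOf_eq, Set.mem_insert_iff, Set.mem_singleton_iff]
      constructor
      · rintro ⟨hy, heq2⟩
        have hEy : y^k + 1 = (τ-2) * ∑ j ∈ Finset.Icc 1 (k-1), y^j := by linarith
        have hne1 : y ≠ 1 := by
          intro he
          subst he
          rw [one_pow, S_one' k hk] at hEy
          linarith
        rcases lt_or_gt_of_ne hne1 with h | h
        · left
          have h1y : 1 < 1/y := one_lt_one_div hy h
          have hEinv := symm_lem k hk (τ-2) y hy hEy
          have h2 := uniq (1/y) h1y hEinv
          rw [← h2, one_div_one_div]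
        · right
          exact uniq y h hEy
      · intro h
        rcases h with h | h
        · subst h
          have hEinv := symm_lem k hk (τ-2) y₀ hy₀pos hE₀
          exact ⟨by positivity, by linarith⟩
        · subst h
          exact ⟨hy₀pos, by linarith⟩
    rw [hset]
    apply Set.ncard_pair
    have : 1/y₀ < 1 := by
      rw [div_lt_one hy₀pos]
      exact hy₀1
    exact ne_of_lt (by linarith)
end

section
/- Let k = 2 and let τ > 2 be a real number. If x, y, z > 0 with x ≠ y satisfy the system x = (x+y−τ)·z² + τ·z − y, 1 = (x+y−τ)·x² + τ·x − z, z = (x+y−τ)·y² + τ·y − 1, then (x+y−τ)·(x+y) + τ = 0; consequently τ ≥ 4 and x + y = (τ + √(τ(τ−4)))/2 or x + y = (τ − √(τ(τ−4)))/2. -/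
/-- For `k = 2` and `τ > 2`: if `x, y, z > 0` with `x ≠ y` solve the system
`x = (x+y−τ)z² + τz − y`, `1 = (x+y−τ)x² + τx − z`, `z = (x+y−τ)y² + τy − 1`,
then `(x+y−τ)(x+y) + τ = 0`; consequently `τ ≥ 4` and
`x + y = (τ ± √(τ(τ−4)))/2`. -/
theorem sos_four_periodic_nonmirror_k2
    (τ : ℝ) (hτ : 2 < τ)
    (x y z : ℝ) (hx : 0 < x) (hy : 0 < y) (hz : 0 < z) (hxy : x ≠ y)
    (h1 : x = (x + y - τ) * z ^ 2 + τ * z - y)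
    (h2 : (1 : ℝ) = (x + y - τ) * x ^ 2 + τ * x - z)
    (h3 : z = (x + y - τ) * y ^ 2 + τ * y - 1) :
    (x + y - τ) * (x + y) + τ = 0 ∧ 4 ≤ τ ∧
    (x + y = (τ + Real.sqrt (τ * (τ - 4))) / 2 ∨
     x + y = (τ - Real.sqrt (τ * (τ - 4))) / 2) := by
  have hprod : (x - y) * ((x + y - τ) * (x + y) + τ) = 0 := by
    linear_combination h3 - h2
  have hne : x - y ≠ 0 := sub_ne_zero.mpr hxy
  have key : (x + y - τ) * (x + y) + τ = 0 :=
    (mul_eq_zero.mp hprod).resolve_left hne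
  have hdisc : τ * (τ - 4) = (2 * (x + y) - τ) ^ 2 := by
    linear_combination (-4 : ℝ) * key
  have hτ4 : 4 ≤ τ := by nlinarith [sq_nonneg (2 * (x + y) - τ)]
  have hsqrt : Real.sqrt (τ * (τ - 4)) = |2 * (x + y) - τ| := by
    rw [hdisc, Real.sqrt_sq_eq_abs]
  refine ⟨key, hτ4, ?_⟩
  rcases le_or_gt τ (2 * (x + y)) with h | h
  · left
    rw [hsqrt, abs_of_nonneg (by linarith)]
    ring
  · right
    rw [hsqrt, abs_of_neg (by linarith)]
    ring
end

section
/- Let k = 2 and let τ ≥ 4 be a real number. Set a = (τ − 2 + √(τ(τ−4)))/2 and b = (τ − 2 − √(τ(τ−4)))/2. Then the triples (x, y, z) = (a, 1, a) and (x, y, z) = (1, b, b) satisfy the system x = (x+y−τ)·z² + τ·z − y, 1 = (x+y−τ)·x² + τ·x − z, z = (x+y−τ)·y² + τ·y − 1, and a, b > 0. -/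
/-- For `k = 2` and `τ ≥ 4`, with `a = (τ − 2 + √(τ(τ−4)))/2` and
`b = (τ − 2 − √(τ(τ−4)))/2`, the triples `(a, 1, a)` and `(1, b, b)` satisfy
the system `x = (x+y−τ)z² + τz − y`, `1 = (x+y−τ)x² + τx − z`,
`z = (x+y−τ)y² + τy − 1`, and `a, b > 0`. -/
theorem sos_four_periodic_nonmirror_explicit_k2
    (τ : ℝ) (hτ : 4 ≤ τ)
    (a b : ℝ)
    (ha : a = (τ - 2 + Real.sqrt (τ * (τ - 4))) / 2)
    (hb : b = (τ - 2 - Real.sqrt (τ * (τ - 4))) / 2) :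
    0 < a ∧ 0 < b ∧
    (a = (a + 1 - τ) * a ^ 2 + τ * a - 1 ∧
     (1 : ℝ) = (a + 1 - τ) * a ^ 2 + τ * a - a ∧
     a = (a + 1 - τ) * 1 ^ 2 + τ * 1 - 1) ∧
    ((1 : ℝ) = (1 + b - τ) * b ^ 2 + τ * b - b ∧
     (1 : ℝ) = (1 + b - τ) * 1 ^ 2 + τ * 1 - b ∧
     b = (1 + b - τ) * b ^ 2 + τ * b - 1) := by
  set s := Real.sqrt (τ * (τ - 4)) with hs
  have hs0 : 0 ≤ s := Real.sqrt_nonneg _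
  have hs2 : s ^ 2 = τ * (τ - 4) := Real.sq_sqrt (by nlinarith)
  have ha2 : a ^ 2 = (τ - 2) * a - 1 := by rw [ha]; nlinarith [hs2]
  have hb2 : b ^ 2 = (τ - 2) * b - 1 := by rw [hb]; nlinarith [hs2]
  have hapos : 0 < a := by rw [ha]; nlinarith
  have hbpos : 0 < b := by rw [hb]; nlinarith [hs2, hs0]
  refine ⟨hapos, hbpos, ⟨?_, ?_, ?_⟩, ⟨?_, ?_, ?_⟩⟩ <;> nlinarith [ha2, hb2, sq_nonneg a, sq_nonneg b, hapos, hbpos]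
end
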